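/- Let V, V₀ ∈ ℝ^{n×k} satisfy VᵀV = I_k and V₀ᵀV₀ = I_k, and let M ∈ ℝ^{n×n} satisfy (I_n − VVᵀ) M (I_n − V₀V₀ᵀ) = 0. Then for every symmetric matrix W ∈ ℝ^{n×n}: ⟨M, W⟩ ≤ (3/2)‖M‖_F² + ‖VVᵀW‖_F² + ‖V₀V₀ᵀW‖_F². -/
import Mathlib

open Matrix

/-- Frobenius norm squared of a real matrix. -/
noncomputable def frobSq {n m : ℕ} (A : Matrix (Fin n) (Fin m) ℝ) : ℝ :=
  ∑ i, ∑ j, (A i j) ^ 2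

/-- Trace inner product on square real matrices. -/
noncomputable def mip {n : ℕ} (A B : Matrix (Fin n) (Fin n) ℝ) : ℝ :=
  Matrix.trace (A * Bᵀ)

/-- Spectral norm (ℓ²→ℓ² operator norm) of a real square matrix. -/
noncomputable def specNorm {n : ℕ} (A : Matrix (Fin n) (Fin n) ℝ) : ℝ :=
  ‖Matrix.toEuclideanCLM (𝕜 := ℝ) A‖

lemma mip_eq {n : ℕ} (A B : Matrix (Fin n) (Fin n) ℝ) :
    mip A B = ∑ i, ∑ j, A i j * B i j := by
  simp [mip, Matrix.trace, Matrix.mul_apply, Matrix.diag]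

lemma frobSq_nonneg {n m : ℕ} (A : Matrix (Fin n) (Fin m) ℝ) : 0 ≤ frobSq A := by
  apply Finset.sum_nonneg; intro i _
  exact Finset.sum_nonneg fun j _ => sq_nonneg _

lemma frobSq_transpose {n m : ℕ} (A : Matrix (Fin n) (Fin m) ℝ) : frobSq Aᵀ = frobSq A := by
  rw [frobSq, frobSq, Finset.sum_comm]
  rfl

lemma frobSq_neg {n m : ℕ} (A : Matrix (Fin n) (Fin m) ℝ) : frobSq (-A) = frobSq A := by
  simp [frobSq]

lemma mip_le {n : ℕ} (A B : Matrix (Fin n) (Fin n) ℝ) :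
    mip A B ≤ frobSq A / 2 + frobSq B / 2 := by
  rw [mip_eq, frobSq, frobSq]
  have h : ∀ i ∈ Finset.univ, ∑ j, A i j * B i j ≤
      ∑ j : Fin n, ((A i j) ^ 2 / 2 + (B i j) ^ 2 / 2) := by
    intro i _
    apply Finset.sum_le_sum
    intro j _
    nlinarith [sq_nonneg (A i j - B i j)]
  calc ∑ i, ∑ j, A i j * B i j
      ≤ ∑ i, ∑ j : Fin n, ((A i j) ^ 2 / 2 + (B i j) ^ 2 / 2) := Finset.sum_le_sum h
    _ = (∑ i, ∑ j, (A i j) ^ 2) / 2 + (∑ i, ∑ j, (B i j) ^ 2) / 2 := by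
        simp [Finset.sum_add_distrib, Finset.sum_div]

lemma mip_add_left {n : ℕ} (A B C : Matrix (Fin n) (Fin n) ℝ) :
    mip (A + B) C = mip A C + mip B C := by
  simp [mip, add_mul]

lemma mip_sub_left {n : ℕ} (A B C : Matrix (Fin n) (Fin n) ℝ) :
    mip (A - B) C = mip A C - mip B C := by
  simp [mip, sub_mul]

lemma mip_neg_right {n : ℕ} (A B : Matrix (Fin n) (Fin n) ℝ) :
    mip A (-B) = -mip A B := by
  simp [mip]

lemma frobSq_add_of_orth {n : ℕ} (A B : Matrix (Fin n) (Fin n) ℝ)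
    (h : mip A B = 0) : frobSq (A + B) = frobSq A + frobSq B := by
  have hAB : mip A B = ∑ i, ∑ j, A i j * B i j := mip_eq A B
  rw [hAB] at h
  rw [frobSq, frobSq, frobSq]
  have : ∀ i : Fin n, ∀ j : Fin n, ((A + B) i j) ^ 2 =
      (A i j) ^ 2 + 2 * (A i j * B i j) + (B i j) ^ 2 := by
    intro i j; simp [Matrix.add_apply]; ring
  calc ∑ i, ∑ j, ((A + B) i j) ^ 2
      = ∑ i, ∑ j, ((A i j) ^ 2 + 2 * (A i j * B i j) + (B i j) ^ 2) := by
        refine Finset.sum_congr rfl fun i _ => Finset.sum_congr rfl fun j _ => this i j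
    _ = (∑ i, ∑ j, (A i j) ^ 2) + 2 * (∑ i, ∑ j, A i j * B i j)
        + (∑ i, ∑ j, (B i j) ^ 2) := by
        simp [Finset.sum_add_distrib, Finset.mul_sum]
    _ = (∑ i, ∑ j, (A i j) ^ 2) + (∑ i, ∑ j, (B i j) ^ 2) := by rw [h]; ring

lemma frobSq_mul_proj {n : ℕ} (X Q : Matrix (Fin n) (Fin n) ℝ)
    (hQs : Qᵀ = Q) (hQi : Q * Q = Q) :
    frobSq (X * Q) ≤ frobSq X := by
  have hz : Q * (1 - Q)ᵀ = 0 := by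
    rw [Matrix.transpose_sub, Matrix.transpose_one, hQs, mul_sub, mul_one, hQi, sub_self]
  have hcross : mip (X * Q) (X * (1 - Q)) = 0 := by
    have : X * Q * (X * (1 - Q))ᵀ = X * (Q * (1 - Q)ᵀ) * Xᵀ := by
      rw [Matrix.transpose_mul]
      noncomm_ring
    rw [mip, this, hz]
    simp
  have hdec : X = X * Q + X * (1 - Q) := by noncomm_ring
  calc frobSq (X * Q) ≤ frobSq (X * Q) + frobSq (X * (1 - Q)) := by
        have := frobSq_nonneg (X * (1 - Q)); linarith
    _ = frobSq (X * Q + X * (1 - Q)) := (frobSq_add_of_orth _ _ hcross).symm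
    _ = frobSq X := by rw [← hdec]

theorem sos_spectral_hoelder_I (n k : ℕ) (V V₀ : Matrix (Fin n) (Fin k) ℝ)
    (M W : Matrix (Fin n) (Fin n) ℝ)
    (hV : Vᵀ * V = 1) (hV₀ : V₀ᵀ * V₀ = 1)
    (hM : (1 - V * Vᵀ) * M * (1 - V₀ * V₀ᵀ) = 0) (hW : Wᵀ = W) :
    mip M W ≤ (3 / 2) * frobSq M + frobSq (V * Vᵀ * W) + frobSq (V₀ * V₀ᵀ * W) := by
  set P : Matrix (Fin n) (Fin n) ℝ := V * Vᵀ with hP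
  set Q : Matrix (Fin n) (Fin n) ℝ := V₀ * V₀ᵀ with hQ
  have hPs : Pᵀ = P := by rw [hP, Matrix.transpose_mul, Matrix.transpose_transpose]
  have hQs : Qᵀ = Q := by rw [hQ, Matrix.transpose_mul, Matrix.transpose_transpose]
  have hQi : Q * Q = Q := by
    rw [hQ]
    rw [Matrix.mul_assoc, ← Matrix.mul_assoc V₀ᵀ V₀ V₀ᵀ, hV₀, Matrix.one_mul]
  have hMdec : M = P * M + M * Q - P * M * Q := by
    have h : M - (P * M + M * Q - P * M * Q) = 0 := by rw [← hM]; noncomm_ring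
    exact (sub_eq_zero.mp h)
  -- convert to inner products against M
  have e1 : mip (P * M) W = mip M (P * W) := by
    rw [mip, mip, Matrix.transpose_mul, hPs, mul_assoc, Matrix.trace_mul_comm, mul_assoc]
  have e2 : mip (M * Q) W = mip M (W * Q) := by
    rw [mip, mip, Matrix.transpose_mul, hQs, mul_assoc]
  have e3 : mip (P * M * Q) W = mip M (P * (W * Q)) := by
    rw [mip, mip]
    have h1 : P * M * Q * Wᵀ = P * (M * (Q * Wᵀ)) := by noncomm_ring
    have h2 : M * (P * (W * Q))ᵀ = M * (Q * Wᵀ) * P := by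
      rw [Matrix.transpose_mul, Matrix.transpose_mul, hPs, hQs, hW]; noncomm_ring
    rw [h1, h2, Matrix.trace_mul_comm, mul_assoc]
  have hsplit : mip M W = mip M (P * W) + mip M (W * Q) - mip M (P * (W * Q)) := by
    calc mip M W = mip (P * M + M * Q - P * M * Q) W := by rw [← hMdec]
      _ = mip (P * M) W + mip (M * Q) W - mip (P * M * Q) W := by
          rw [mip_sub_left, mip_add_left]
      _ = _ := by rw [e1, e2, e3]
  have b1 : mip M (P * W) ≤ frobSq M / 2 + frobSq (P * W) / 2 := mip_le _ _
  have hWQ : frobSq (W * Q) = frobSq (Q * W) := by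
    have : W * Q = (Q * W)ᵀ := by rw [Matrix.transpose_mul, hQs, hW]
    rw [this, frobSq_transpose]
  have b2 : mip M (W * Q) ≤ frobSq M / 2 + frobSq (Q * W) / 2 := by
    have := mip_le M (W * Q); rw [hWQ] at this; exact this
  have b3 : -mip M (P * (W * Q)) ≤ frobSq M / 2 + frobSq (P * W) / 2 := by
    have h := mip_le M (-(P * (W * Q)))
    rw [mip_neg_right, frobSq_neg] at h
    have hc : frobSq (P * (W * Q)) ≤ frobSq (P * W) := by
      have := frobSq_mul_proj (P * W) Q hQs hQi
      rwa [mul_assoc] at this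
    linarith
  have hQWnn := frobSq_nonneg (Q * W)
  rw [hsplit]
  linarith
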